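/- arXiv:quant-ph/0607073 — 8 statements merged into one kernel-verified Lean document; each statement's English description precedes it below -/
import Mathlib

section
/- If M is a k×k complex Hadamard matrix with entries m_{ij}, and N_1,...,N_k are n×n complex Hadamard matrices, then the kn×kn block matrix K whose (i,j)-th block is m_{ij}·N_j is a complex Hadamard matrix. -/
/-!
With `D` the block diagonal matrix `diag(N₁, …, N_k)`, Dita's matrix factors as
`K = (M ⊗ 1) D`. Since `D Dᴴ = n • 1`, we get `K Kᴴ = n • (M Mᴴ ⊗ 1) = n k • 1`, and the entries of
`K` are products of unimodular numbers.
-/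

open Matrix Complex

/-- A complex Hadamard matrix: all entries unimodular and rows pairwise orthogonal,
i.e. `H * Hᴴ = N • 1`. -/
def IsCHadamard {ι : Type*} [Fintype ι] [DecidableEq ι] (H : Matrix ι ι ℂ) : Prop :=
  (∀ i j, ‖H i j‖ = 1) ∧ H * Hᴴ = (Fintype.card ι : ℂ) • 1

open scoped Kronecker

namespace Matrix

variable {ι κ R : Type*}

def ditaProduct [Mul R] (M : Matrix ι ι R) (N : ι → Matrix κ κ R) :
    Matrix (ι × κ) (ι × κ) R :=
  of fun p q => M p.1 q.1 * N q.1 p.2 q.2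

variable [Fintype ι] [Fintype κ] [DecidableEq ι] [DecidableEq κ]

-- Mathlib's `blockDiagonal` puts the block index second, hence the reindexing by `prodComm`.
theorem ditaProduct_eq_kronecker_one_mul [CommSemiring R] (M : Matrix ι ι R)
    (N : ι → Matrix κ κ R) :
    ditaProduct M N =
      (M ⊗ₖ 1) * reindex (.prodComm κ ι) (.prodComm κ ι) (blockDiagonal N) := by
  ext ⟨i, a⟩ ⟨j, b⟩
  simp [ditaProduct, mul_apply, one_apply, blockDiagonal_apply, Fintype.sum_prod_type]

theorem reindex_blockDiagonal_mul_conjTranspose_eq_smul_one [CommSemiring R] [StarRing R]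
    {N : ι → Matrix κ κ R} {c : R} (hN : ∀ j, N j * (N j)ᴴ = c • 1) :
    reindex (.prodComm κ ι) (.prodComm κ ι) (blockDiagonal N) *
      (reindex (.prodComm κ ι) (.prodComm κ ι) (blockDiagonal N))ᴴ = c • 1 := by
  have hblock : blockDiagonal N * (blockDiagonal N)ᴴ = c • 1 := by
    rw [blockDiagonal_conjTranspose, ← blockDiagonal_mul, ← blockDiagonal_one, ← blockDiagonal_smul]
    exact congrArg blockDiagonal (funext hN)
  rw [conjTranspose_reindex, ← coe_reindexAlgEquiv R, ← map_mul, hblock, map_smul, map_one]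

end Matrix

theorem isCHadamard_ditaProduct {ι κ : Type*} [Fintype ι] [Fintype κ] [DecidableEq ι]
    [DecidableEq κ] {M : Matrix ι ι ℂ} {N : ι → Matrix κ κ ℂ} (hM : IsCHadamard M)
    (hN : ∀ j, IsCHadamard (N j)) : IsCHadamard (ditaProduct M N) := by
  refine ⟨fun p q => by simp [ditaProduct, hM.1, (hN _).1], ?_⟩
  rw [ditaProduct_eq_kronecker_one_mul]
  set D := reindex (.prodComm κ ι) (.prodComm κ ι) (blockDiagonal N)
  have hD : D * Dᴴ = (Fintype.card κ : ℂ) • 1 :=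
    reindex_blockDiagonal_mul_conjTranspose_eq_smul_one fun j => (hN j).2
  calc (M ⊗ₖ 1) * D * ((M ⊗ₖ 1) * D)ᴴ = (M ⊗ₖ 1) * (D * Dᴴ) * (M ⊗ₖ 1)ᴴ := by
        simp only [conjTranspose_mul, Matrix.mul_assoc]
    _ = (Fintype.card κ : ℂ) • ((M * Mᴴ) ⊗ₖ 1) := by
        rw [hD, Matrix.mul_smul, Matrix.mul_one, Matrix.smul_mul, conjTranspose_kronecker,
          conjTranspose_one, ← mul_kronecker_mul, Matrix.mul_one]
    _ = (Fintype.card (ι × κ) : ℂ) • 1 := by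
        rw [hM.2, smul_kronecker, one_kronecker_one, smul_smul, Fintype.card_prod, Nat.cast_mul,
          mul_comm]

/-- Dita's construction: the block matrix whose `(i,j)`-th block is `m_{ij} • N_j`
is a complex Hadamard matrix of order `k * n`. -/
theorem dita_construction (k n : ℕ) (M : Matrix (Fin k) (Fin k) ℂ)
    (N : Fin k → Matrix (Fin n) (Fin n) ℂ)
    (hM : IsCHadamard M) (hN : ∀ j, IsCHadamard (N j))
    (K : Matrix (Fin k × Fin n) (Fin k × Fin n) ℂ)
    (hK : ∀ (i j : Fin k) (a b : Fin n), K (i, a) (j, b) = M i j * N j a b) :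
    IsCHadamard K := by
  have hK_eq : K = ditaProduct M N := by
    ext ⟨i, a⟩ ⟨j, b⟩
    exact hK i j a b
  exact hK_eq ▸ isCHadamard_ditaProduct hM hN
end

section
/- Let G be a finite abelian group, H ≤ G a subgroup of index k with |H|-subsets T_1,...,T_k ⊆ H sharing a common spectrum L ⊆ Ĥ of size n, and let (Q,S) be a spectral pair in G/H with |Q| = k. Choose representatives q_1,...,q_k ∈ G of the cosets corresponding to Q. Then Γ := ⋃_{m=1}^k (q_m + T_m) is spectral in G; specifically, choosing extensions λ̃_j ∈ Ĝ of λ_j ∈ L and lifts s̃_i ∈ Ĝ of s_i ∈ S, the set Σ := {s̃_i · λ̃_j : 1 ≤ i ≤ k, 1 ≤ j ≤ n} is a spectrum of Γ. -/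
/-!
The inner product of `s̃_i λ̃_j` and `s̃_{i'} λ̃_{j'}` on `Γ` splits along the cosets: the lifts
`s̃` are trivial on `H`, so on `q_m + T_m` they are constant, and the sum over `q_m + T_m` is a
unimodular factor times the inner product of `λ_j` and `λ_{j'}` on `T_m`. For `j ≠ j'` every such
inner product vanishes; for `j = j'` each equals `n`, the unimodular factor becomes
`s_i(q_m) conj s_{i'}(q_m)`, and what remains is `n` times the inner product of `s_i` and `s_{i'}`
on `Q`, which vanishes for `i ≠ i'`.
-/

open Complex ComplexConjugate

lemma AddChar.mul_conj_apply_self {A K : Type*} [AddLeftCancelMonoid A] [Finite A] [RCLike K]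
    (ψ : AddChar A K) (a : A) : ψ a * conj (ψ a) = 1 := by
  rw [RCLike.mul_conj, AddChar.norm_apply]
  simp

lemma AddChar.mul_conj_apply_add {A R : Type*} [AddMonoid A] [CommSemiring R] [StarRing R]
    (ψ χ : AddChar A R) (a b : A) :
    ψ (a + b) * conj (χ (a + b)) = (ψ a * conj (χ a)) * (ψ b * conj (χ b)) := by
  rw [AddChar.map_add_eq_mul, AddChar.map_add_eq_mul, map_mul]
  ring

lemma AddChar.apply_eq_one_of_mem_of_lift {G M : Type*} [AddCommGroup G] [Monoid M]
    {H : AddSubgroup G} {ψ : AddChar G M} {s : AddChar (G ⧸ H) M}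
    (hlift : ∀ g, ψ g = s (QuotientAddGroup.mk g)) {h : G} (hh : h ∈ H) : ψ h = 1 := by
  rw [hlift, (QuotientAddGroup.eq_zero_iff h).mpr hh, AddChar.map_zero_eq_one]

lemma AddChar.sum_translates_mul_conj {G R ι κ : Type*} [AddCommGroup G] [CommSemiring R]
    [StarRing R] [Fintype ι] [Fintype κ] (H : AddSubgroup G) (q : ι → G) (T : ι → κ → H)
    {ψ ψ' : AddChar G R} (hψ : ∀ h ∈ H, ψ h = 1) (hψ' : ∀ h ∈ H, ψ' h = 1) (χ χ' : AddChar G R) :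
    ∑ m, ∑ r, (ψ * χ) (q m + (T m r : G)) * conj ((ψ' * χ') (q m + (T m r : G)))
      = ∑ m, (ψ (q m) * conj (ψ' (q m))) * (χ (q m) * conj (χ' (q m))) *
          ∑ r, χ (T m r) * conj (χ' (T m r)) := by
  refine Finset.sum_congr rfl fun m _ => ?_
  rw [Finset.mul_sum]
  refine Finset.sum_congr rfl fun r _ => ?_
  rw [AddChar.mul_conj_apply_add, AddChar.mul_apply, AddChar.mul_apply, AddChar.mul_apply,
    AddChar.mul_apply, hψ _ (T m r).2, hψ' _ (T m r).2, map_mul, map_mul]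
  simp only [map_one, one_mul]
  ring

theorem tiling_spectral_construction_general
    (G : Type*) [AddCommGroup G] [Fintype G] (H : AddSubgroup G)
    (k n : ℕ)
    -- the sets T_m ⊆ H, each with n elements
    (T : Fin k → Fin n → H)
    -- the common spectrum L of the T_m in Ĥ
    (L : Fin n → AddChar H ℂ)
    (hL : ∀ m, ∀ j j' : Fin n,
      ∑ r : Fin n, L j (T m r) * (starRingEnd ℂ) (L j' (T m r))
        = if j = j' then (n : ℂ) else 0)
    -- representatives q_m of the k distinct cosets forming Q
    (q : Fin k → G)
    -- the spectrum S of Q in the dual of G/H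
    (s : Fin k → AddChar (G ⧸ H) ℂ)
    (hS : ∀ i i' : Fin k,
      ∑ m : Fin k, s i (QuotientAddGroup.mk (q m)) *
          (starRingEnd ℂ) (s i' (QuotientAddGroup.mk (q m)))
        = if i = i' then (k : ℂ) else 0)
    -- extensions λ̃_j of λ_j to Ĝ
    (lt : Fin n → AddChar G ℂ) (hext : ∀ (j : Fin n) (h : H), lt j (h : G) = L j h)
    -- lifts s̃_i of s_i, constant on cosets of H
    (st : Fin k → AddChar G ℂ) (hlift : ∀ (i : Fin k) (g : G),
      st i g = s i (QuotientAddGroup.mk g)) :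
    -- Σ is a spectrum of Γ: the characters s̃_i λ̃_j are pairwise orthogonal on Γ
    ∀ (i i' : Fin k) (j j' : Fin n), (i, j) ≠ (i', j') →
      ∑ m : Fin k, ∑ r : Fin n,
        (st i * lt j) (q m + (T m r : G)) *
          (starRingEnd ℂ) ((st i' * lt j') (q m + (T m r : G))) = 0 := by
  intro i i' j j' hne
  rw [AddChar.sum_translates_mul_conj H q T
    (fun _ => AddChar.apply_eq_one_of_mem_of_lift (hlift i))
    (fun _ => AddChar.apply_eq_one_of_mem_of_lift (hlift i'))]
  simp only [hext, hL, hlift]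
  by_cases hj : j = j'
  · subst hj
    have hi : i ≠ i' := fun h => hne (by rw [h])
    simp only [AddChar.mul_conj_apply_self, mul_one]
    rw [← Finset.sum_mul, hS i i', if_neg hi, zero_mul]
  · simp only [if_neg hj, mul_zero, Finset.sum_const_zero]

/-- Tiling-type construction of spectral sets (Proposition 2.2 of [nspec]):
if `T_1,…,T_k ⊆ H` share a common spectrum `L ⊆ Ĥ`, `(Q,S)` is a spectral pair
in `G/H` with `|Q| = k`, `q_m` are representatives of the cosets in `Q`, then
`Σ = {s̃_i·λ̃_j}` is a spectrum of `Γ = ⋃_m (q_m + T_m)`, i.e. the characters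
`s̃_i λ̃_j` are pairwise orthogonal on `Γ`. -/
theorem tiling_spectral_construction
    (G : Type*) [AddCommGroup G] [Fintype G] (H : AddSubgroup G)
    (k n : ℕ) (hk : Nat.card (G ⧸ H) = k)
    -- the sets T_m ⊆ H, each with n elements
    (T : Fin k → Fin n → H) (hTinj : ∀ m, Function.Injective (T m))
    -- the common spectrum L of the T_m in Ĥ
    (L : Fin n → AddChar H ℂ)
    (hL : ∀ m, ∀ j j' : Fin n,
      ∑ r : Fin n, L j (T m r) * (starRingEnd ℂ) (L j' (T m r))
        = if j = j' then (n : ℂ) else 0)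
    -- representatives q_m of the k distinct cosets forming Q
    (q : Fin k → G) (hq : Function.Injective fun m => (QuotientAddGroup.mk (q m) : G ⧸ H))
    -- the spectrum S of Q in the dual of G/H
    (s : Fin k → AddChar (G ⧸ H) ℂ)
    (hS : ∀ i i' : Fin k,
      ∑ m : Fin k, s i (QuotientAddGroup.mk (q m)) *
          (starRingEnd ℂ) (s i' (QuotientAddGroup.mk (q m)))
        = if i = i' then (k : ℂ) else 0)
    -- extensions λ̃_j of λ_j to Ĝ
    (lt : Fin n → AddChar G ℂ) (hext : ∀ (j : Fin n) (h : H), lt j (h : G) = L j h)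
    -- lifts s̃_i of s_i, constant on cosets of H
    (st : Fin k → AddChar G ℂ) (hlift : ∀ (i : Fin k) (g : G),
      st i g = s i (QuotientAddGroup.mk g)) :
    -- Σ is a spectrum of Γ: the characters s̃_i λ̃_j are pairwise orthogonal on Γ
    ∀ (i i' : Fin k) (j j' : Fin n), (i, j) ≠ (i', j') →
      ∑ m : Fin k, ∑ r : Fin n,
        (st i * lt j) (q m + (T m r : G)) *
          (starRingEnd ℂ) ((st i' * lt j') (q m + (T m r : G))) = 0 :=
  tiling_spectral_construction_general G H k n T L hL q s hS lt hext st hlift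
end

section
/- With G = Z_{p1q1} × Z_{p2q2} × Z_{p3q3}, A the standard box, and S the grid spectrum, define S' by replacing the grid-line L_1 = {0,q_1,...,(p_1−1)q_1} × {q_2} × {0} with L_1' (adding +1 to first coordinates), L_2 = {0} × {0,q_2,...,(p_2−1)q_2} × {q_3} with L_2' (adding +1 to second coordinates), and L_3 = {q_1} × {0} × {0,q_3,...,(p_3−1)q_3} with L_3' (adding +1 to third coordinates). Then for any r ∈ S' − S', either q_1 | r_1, or q_2 | r_2, or q_3 | r_3, and consequently S' is still a spectrum of A. -/
/-!
Every point of the perturbed grid is `(q₁a, q₂b, q₃c)` plus `0` or a unit vector. Two distinct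
points differ in some coordinate `j` by a nonzero multiple of `q_j`: two points of the same kind
are congruent coordinatewise modulo `q`, so any coordinate where they differ will do; a grid point
and a point of `L_i'` differ in one of the two unshifted coordinates because the grid point avoids
`L_i`; and points of `L_i'`, `L_k'` with `i ≠ k` differ in the third coordinate, where one is `0`
and the other `q_j`. As all coordinates lie in `[0, p_jq_j)`, that difference `d` is not a multiple
of `p_jq_j`. The character sum factorizes over the coordinates, and its `j`-th factor
`∑_{x < p_j} exp(2πi d x / p_jq_j)` is a full geometric sum of a `p_j`-th root of unity `≠ 1`.
-/

open Complex Real Finset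

theorem sum_exp_two_pi_I_mul_div_eq_zero {n : ℕ} {m : ℤ} (hm : ¬ (n : ℤ) ∣ m) :
    ∑ x : Fin n, exp (2 * π * I * (m * x / n)) = 0 := by
  rcases eq_or_ne n 0 with rfl | hn
  · simp
  set ζ := exp (2 * π * I * (m / n))
  have hζn : ζ ^ n = 1 := by
    rw [← Complex.exp_nat_mul, ← exp_int_mul_two_pi_mul_I m]
    congr 1
    field_simp
  have hζ : ζ ≠ 1 := by
    rw [Ne, Complex.exp_eq_one_iff]
    rintro ⟨k, hk⟩
    refine hm ⟨k, ?_⟩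
    field_simp at hk
    exact_mod_cast (by linear_combination hk : (m : ℂ) = n * k)
  calc ∑ x : Fin n, exp (2 * π * I * (m * x / n))
      = ∑ x ∈ range n, ζ ^ x := by
        rw [Fin.sum_univ_eq_sum_range (fun x => exp (2 * π * I * (m * x / n)))]
        refine sum_congr rfl fun x _ => ?_
        rw [← Complex.exp_nat_mul]
        congr 1
        ring
    _ = 0 := by rw [geom_sum_eq hζ, hζn, sub_self, zero_div]

theorem sum_exp_two_pi_I_mul_div_mul_eq_zero {p q : ℕ} {d : ℤ} (hq : q ≠ 0) (hd : (q : ℤ) ∣ d)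
    (hpq : ¬ (p * q : ℤ) ∣ d) :
    ∑ x : Fin p, exp (2 * π * I * (((d : ℝ) * (x : ℕ) / (p * q) : ℝ) : ℂ)) = 0 := by
  obtain ⟨m, rfl⟩ := hd
  have hm : ¬ (p : ℤ) ∣ m := fun h => hpq (by simpa [mul_comm] using mul_dvd_mul_left (q : ℤ) h)
  rw [← sum_exp_two_pi_I_mul_div_eq_zero hm]
  refine sum_congr rfl fun x _ => ?_
  congr 3
  push_cast
  field_simp

theorem sum_exp_two_pi_I_add_add {α β γ : Type*} [Fintype α] [Fintype β] [Fintype γ]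
    (f : α → ℝ) (g : β → ℝ) (h : γ → ℝ) :
    ∑ x, ∑ y, ∑ z, exp (2 * π * I * ((f x + g y + h z : ℝ) : ℂ)) =
      (∑ x, exp (2 * π * I * (f x : ℂ))) * (∑ y, exp (2 * π * I * (g y : ℂ))) *
        ∑ z, exp (2 * π * I * (h z : ℂ)) := by
  rw [sum_mul_sum, sum_mul]
  simp_rw [sum_mul, mul_sum, ← Complex.exp_add]
  push_cast
  ring_nf

def perturbedGrid (p q : Fin 3 → ℕ) : Finset (ℤ × ℤ × ℤ) :=
  (image (fun t : Fin (p 0) × Fin (p 1) × Fin (p 2) =>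
        ((q 0 : ℤ) * t.1, (q 1 : ℤ) * t.2.1, (q 2 : ℤ) * t.2.2)) univ \
      (image (fun x : Fin (p 0) => ((q 0 : ℤ) * x, (q 1 : ℤ), 0)) univ ∪
        image (fun y : Fin (p 1) => (0, (q 1 : ℤ) * y, (q 2 : ℤ))) univ ∪
        image (fun z : Fin (p 2) => ((q 0 : ℤ), 0, (q 2 : ℤ) * z)) univ)) ∪
    image (fun x : Fin (p 0) => ((q 0 : ℤ) * x + 1, (q 1 : ℤ), 0)) univ ∪
    image (fun y : Fin (p 1) => (0, (q 1 : ℤ) * y + 1, (q 2 : ℤ))) univ ∪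
    image (fun z : Fin (p 2) => ((q 0 : ℤ), 0, (q 2 : ℤ) * z + 1)) univ

def IsPerturbedGridPoint (q : Fin 3 → ℕ) (s : ℤ × ℤ × ℤ) : Prop :=
  (∃ a b c : ℤ, s = ((q 0 : ℤ) * a, (q 1 : ℤ) * b, (q 2 : ℤ) * c) ∧
      ¬(b = 1 ∧ c = 0) ∧ ¬(a = 0 ∧ c = 1) ∧ ¬(a = 1 ∧ b = 0)) ∨
    (∃ a : ℤ, s = ((q 0 : ℤ) * a + 1, (q 1 : ℤ), 0)) ∨
    (∃ b : ℤ, s = (0, (q 1 : ℤ) * b + 1, (q 2 : ℤ))) ∨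
    ∃ c : ℤ, s = ((q 0 : ℤ), 0, (q 2 : ℤ) * c + 1)

theorem isPerturbedGridPoint_of_mem {p q : Fin 3 → ℕ} {s : ℤ × ℤ × ℤ}
    (hs : s ∈ perturbedGrid p q) : IsPerturbedGridPoint q s := by
  simp only [perturbedGrid, mem_union, mem_sdiff, mem_image, mem_univ, true_and, not_or,
    not_exists] at hs
  rcases hs with ((⟨⟨⟨a, b, c⟩, rfl⟩, ⟨hL₁, hL₂⟩, hL₃⟩ | ⟨a, rfl⟩) | ⟨b, rfl⟩) | ⟨c, rfl⟩
  · refine Or.inl ⟨a, b, c, rfl, ?_, ?_, ?_⟩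
    · rintro ⟨hb, hc⟩
      exact hL₁ a (by simp [hb, hc])
    · rintro ⟨ha, hc⟩
      exact hL₂ b (by simp [ha, hc])
    · rintro ⟨ha, hb⟩
      exact hL₃ c (by simp [ha, hb])
  · exact Or.inr (Or.inl ⟨a, rfl⟩)
  · exact Or.inr (Or.inr (Or.inl ⟨b, rfl⟩))
  · exact Or.inr (Or.inr (Or.inr ⟨c, rfl⟩))

theorem IsPerturbedGridPoint.exists_dvd_sub_ne {q : Fin 3 → ℕ} (hq : ∀ j, q j ≠ 0)
    {s t : ℤ × ℤ × ℤ} (hs : IsPerturbedGridPoint q s) (ht : IsPerturbedGridPoint q t)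
    (hst : s ≠ t) :
    ((q 0 : ℤ) ∣ s.1 - t.1 ∧ s.1 ≠ t.1) ∨ ((q 1 : ℤ) ∣ s.2.1 - t.2.1 ∧ s.2.1 ≠ t.2.1) ∨
      ((q 2 : ℤ) ∣ s.2.2 - t.2.2 ∧ s.2.2 ≠ t.2.2) := by
  rcases hs with ⟨a, b, c, rfl, hs₁, hs₂, hs₃⟩ | ⟨a, rfl⟩ | ⟨b, rfl⟩ | ⟨c, rfl⟩ <;>
  rcases ht with ⟨a', b', c', rfl, ht₁, ht₂, ht₃⟩ | ⟨a', rfl⟩ | ⟨b', rfl⟩ | ⟨c', rfl⟩ <;>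
  by_contra h <;>
    simp [hq, eq_comm (a := (0 : ℤ)), ← mul_sub, ← mul_sub_one, ← mul_one_sub] at h hst <;>
    tauto

theorem mem_Ico_of_mem_perturbedGrid {p q : Fin 3 → ℕ} (hp : ∀ j, 2 ≤ p j) (hq : ∀ j, 2 ≤ q j)
    {s : ℤ × ℤ × ℤ} (hs : s ∈ perturbedGrid p q) :
    s.1 ∈ Set.Ico 0 ((p 0 : ℤ) * q 0) ∧ s.2.1 ∈ Set.Ico 0 ((p 1 : ℤ) * q 1) ∧
      s.2.2 ∈ Set.Ico 0 ((p 2 : ℤ) * q 2) := by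
  have hp' : ∀ j, (2 : ℤ) ≤ p j := fun j => by exact_mod_cast hp j
  have hq' : ∀ j, (2 : ℤ) ≤ q j := fun j => by exact_mod_cast hq j
  have hFin : ∀ {n : ℕ} (x : Fin n), (0 : ℤ) ≤ (x : ℕ) ∧ ((x : ℕ) : ℤ) + 1 ≤ n :=
    fun x => ⟨by positivity, by exact_mod_cast x.isLt⟩
  simp only [perturbedGrid, mem_union, mem_sdiff, mem_image, mem_univ, true_and] at hs
  simp only [Set.mem_Ico]
  rcases hs with ((⟨⟨⟨a, b, c⟩, rfl⟩, -⟩ | ⟨x, rfl⟩) | ⟨x, rfl⟩) | ⟨x, rfl⟩ <;> dsimp only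
  · have := hFin a; have := hFin b; have := hFin c
    refine ⟨⟨?_, ?_⟩, ⟨?_, ?_⟩, ?_, ?_⟩ <;> nlinarith [hp' 0, hp' 1, hp' 2, hq' 0, hq' 1, hq' 2]
  all_goals
    have := hFin x
    refine ⟨⟨?_, ?_⟩, ⟨?_, ?_⟩, ?_, ?_⟩ <;> nlinarith [hp' 0, hp' 1, hp' 2, hq' 0, hq' 1, hq' 2]

theorem not_dvd_sub_of_mem_Ico {n x y : ℤ} (hx : x ∈ Set.Ico 0 n) (hy : y ∈ Set.Ico 0 n)
    (hxy : x ≠ y) : ¬ n ∣ x - y := fun h =>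
  hxy <| sub_eq_zero.1 <| Int.eq_zero_of_abs_lt_dvd h <|
    abs_sub_lt_iff.2 ⟨by linarith [hx.2, hy.1], by linarith [hx.1, hy.2]⟩

theorem dvd_sub_and_not_dvd_sub_of_mem_perturbedGrid {p q : Fin 3 → ℕ} (hp : ∀ j, 2 ≤ p j)
    (hq : ∀ j, 2 ≤ q j) {s t : ℤ × ℤ × ℤ} (hs : s ∈ perturbedGrid p q)
    (ht : t ∈ perturbedGrid p q) (hst : s ≠ t) :
    ((q 0 : ℤ) ∣ s.1 - t.1 ∧ ¬ ((p 0 : ℤ) * q 0) ∣ s.1 - t.1) ∨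
      ((q 1 : ℤ) ∣ s.2.1 - t.2.1 ∧ ¬ ((p 1 : ℤ) * q 1) ∣ s.2.1 - t.2.1) ∨
      ((q 2 : ℤ) ∣ s.2.2 - t.2.2 ∧ ¬ ((p 2 : ℤ) * q 2) ∣ s.2.2 - t.2.2) := by
  have hq₀ : ∀ j, q j ≠ 0 := fun j => (zero_lt_two.trans_le (hq j)).ne'
  obtain ⟨hs₀, hs₁, hs₂⟩ := mem_Ico_of_mem_perturbedGrid hp hq hs
  obtain ⟨ht₀, ht₁, ht₂⟩ := mem_Ico_of_mem_perturbedGrid hp hq ht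
  rcases (isPerturbedGridPoint_of_mem hs).exists_dvd_sub_ne hq₀ (isPerturbedGridPoint_of_mem ht)
    hst with ⟨hd, hne⟩ | ⟨hd, hne⟩ | ⟨hd, hne⟩
  exacts [Or.inl ⟨hd, not_dvd_sub_of_mem_Ico hs₀ ht₀ hne⟩,
    Or.inr (Or.inl ⟨hd, not_dvd_sub_of_mem_Ico hs₁ ht₁ hne⟩),
    Or.inr (Or.inr ⟨hd, not_dvd_sub_of_mem_Ico hs₂ ht₂ hne⟩)]

/-- Szabó-type perturbation of the grid spectrum. `S` is the grid
`∏_j {0, q_j, …, (p_j−1)q_j}`, the grid-lines `L₁, L₂, L₃` are replaced by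
their shifted versions `L₁', L₂', L₃'` (adding `+1` to the first, second, third
coordinate respectively), giving `S' = (S \ (L₁∪L₂∪L₃)) ∪ L₁' ∪ L₂' ∪ L₃'`.
Then every difference `r ∈ S' − S'` has `q₁ ∣ r₁` or `q₂ ∣ r₂` or `q₃ ∣ r₃`,
and consequently `S'` is still a spectrum of the box
`A = ∏_j {0, 1/(p_jq_j), …, (p_j−1)/(p_jq_j)}`. -/
theorem perturbed_grid_is_spectrum
    (p q : Fin 3 → ℕ) (hp : ∀ j, 2 ≤ p j) (hq : ∀ j, 2 ≤ q j)
    (S L1 L2 L3 L1' L2' L3' S' : Finset (ℤ × ℤ × ℤ))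
    (hS : S = Finset.image
      (fun t : Fin (p 0) × Fin (p 1) × Fin (p 2) =>
        (((q 0 : ℤ) * t.1, (q 1 : ℤ) * t.2.1, (q 2 : ℤ) * t.2.2) : ℤ × ℤ × ℤ))
      Finset.univ)
    (hL1 : L1 = Finset.image
      (fun x : Fin (p 0) => (((q 0 : ℤ) * x, (q 1 : ℤ), (0 : ℤ)) : ℤ × ℤ × ℤ)) Finset.univ)
    (hL1' : L1' = Finset.image
      (fun x : Fin (p 0) => (((q 0 : ℤ) * x + 1, (q 1 : ℤ), (0 : ℤ)) : ℤ × ℤ × ℤ)) Finset.univ)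
    (hL2 : L2 = Finset.image
      (fun y : Fin (p 1) => (((0 : ℤ), (q 1 : ℤ) * y, (q 2 : ℤ)) : ℤ × ℤ × ℤ)) Finset.univ)
    (hL2' : L2' = Finset.image
      (fun y : Fin (p 1) => (((0 : ℤ), (q 1 : ℤ) * y + 1, (q 2 : ℤ)) : ℤ × ℤ × ℤ)) Finset.univ)
    (hL3 : L3 = Finset.image
      (fun z : Fin (p 2) => (((q 0 : ℤ), (0 : ℤ), (q 2 : ℤ) * z) : ℤ × ℤ × ℤ)) Finset.univ)
    (hL3' : L3' = Finset.image
      (fun z : Fin (p 2) => (((q 0 : ℤ), (0 : ℤ), (q 2 : ℤ) * z + 1) : ℤ × ℤ × ℤ)) Finset.univ)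
    (hS' : S' = (S \ (L1 ∪ L2 ∪ L3)) ∪ L1' ∪ L2' ∪ L3') :
    (∀ s ∈ S', ∀ s' ∈ S',
      (q 0 : ℤ) ∣ (s.1 - s'.1) ∨ (q 1 : ℤ) ∣ (s.2.1 - s'.2.1) ∨ (q 2 : ℤ) ∣ (s.2.2 - s'.2.2)) ∧
    (∀ s ∈ S', ∀ s' ∈ S', s ≠ s' →
      ∑ x : Fin (p 0), ∑ y : Fin (p 1), ∑ z : Fin (p 2),
        Complex.exp (2 * π * Complex.I *
          ((((s.1 - s'.1 : ℤ) : ℝ) * x / (p 0 * q 0)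
            + ((s.2.1 - s'.2.1 : ℤ) : ℝ) * y / (p 1 * q 1)
            + ((s.2.2 - s'.2.2 : ℤ) : ℝ) * z / (p 2 * q 2) : ℝ) : ℂ)) = 0) := by
  obtain rfl : S' = perturbedGrid p q := by subst_vars; rfl
  have hq₀ : ∀ j, q j ≠ 0 := fun j => (zero_lt_two.trans_le (hq j)).ne'
  refine ⟨fun s hs t ht => ?_, fun s hs t ht hst => ?_⟩
  · rcases eq_or_ne s t with rfl | hst
    · simp
    · exact ((isPerturbedGridPoint_of_mem hs).exists_dvd_sub_ne hq₀
        (isPerturbedGridPoint_of_mem ht) hst).imp And.left (Or.imp And.left And.left)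
  · rw [sum_exp_two_pi_I_add_add, mul_eq_zero, mul_eq_zero]
    rcases dvd_sub_and_not_dvd_sub_of_mem_perturbedGrid hp hq hs ht hst with h | h | h
    · exact Or.inl (Or.inl (sum_exp_two_pi_I_mul_div_mul_eq_zero (hq₀ 0) h.1 h.2))
    · exact Or.inl (Or.inr (sum_exp_two_pi_I_mul_div_mul_eq_zero (hq₀ 1) h.1 h.2))
    · exact Or.inr (sum_exp_two_pi_I_mul_div_mul_eq_zero (hq₀ 2) h.1 h.2)
end

section
/- The 8×8 matrix S_8 whose (j,k) entry is e^{2πi·M_{jk}/4}, where M is the integer matrix with rows (0,0,0,0,0,0,0,0), (0,2,1,3,0,2,1,3), (0,2,3,1,0,2,3,1), (0,0,2,2,1,1,3,3), (0,1,0,1,2,3,2,3), (0,3,0,3,2,1,2,1), (0,2,2,0,2,0,0,2), (0,0,2,2,3,3,1,1), is a complex Hadamard matrix. -/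
open Matrix Complex Real

/-- The log-matrix (times 4) of the matrix `S₈`. -/
def M8 : Matrix (Fin 8) (Fin 8) ℕ :=
  !![0,0,0,0,0,0,0,0;
     0,2,1,3,0,2,1,3;
     0,2,3,1,0,2,3,1;
     0,0,2,2,1,1,3,3;
     0,1,0,1,2,3,2,3;
     0,3,0,3,2,1,2,1;
     0,2,2,0,2,0,0,2;
     0,0,2,2,3,3,1,1]

/-!
Since `e^{2πi m/4} = i^m`, `S₈` is the image under `ℤ[i] →+* ℂ` of the matrix `(i^{M_{jk}})` over the
Gaussian integers. There, unimodularity (Gaussian norm `1`) and the Gram identity `S Sᴴ = 8 • 1` are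
exact finite computations, checked by `decide`; both transfer to `ℂ` because `toComplex` is a ring
hom commuting with conjugation.
-/

open GaussianInt

theorem GaussianInt.toComplex_sqrtd : toComplex Zsqrtd.sqrtd = Complex.I := by
  simp [Zsqrtd.sqrtd, toComplex_def']

theorem exp_two_pi_mul_I_mul_div_four (m : ℕ) :
    Complex.exp (2 * π * Complex.I * m / 4) = Complex.I ^ m := by
  rw [show 2 * π * Complex.I * m / 4 = m * (π / 2 * Complex.I) by ring, Complex.exp_nat_mul,
    Complex.exp_pi_div_two_mul_I]

theorem isCHadamard_map_toComplex {ι : Type*} [Fintype ι] [DecidableEq ι]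
    {G : Matrix ι ι GaussianInt} (hnorm : ∀ i j, (G i j).norm = 1)
    (hgram : G * Gᴴ = (Fintype.card ι : GaussianInt) • 1) :
    IsCHadamard (G.map toComplex) := by
  refine ⟨fun i j => ?_, ?_⟩
  · rw [map_apply, Complex.norm_def, ← intCast_real_norm, hnorm, Int.cast_one, Real.sqrt_one]
  · rw [← conjTranspose_map _ fun z => toComplex_star z, ← Matrix.map_mul, hgram,
      Matrix.map_smul' _ _ _ (map_mul _), Matrix.map_one _ (map_zero _) (map_one _), map_natCast]

def gaussianS8 : Matrix (Fin 8) (Fin 8) GaussianInt := Matrix.of fun j k => Zsqrtd.sqrtd ^ M8 j k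

theorem gaussianS8_norm : ∀ j k, (gaussianS8 j k).norm = 1 := by decide

theorem gaussianS8_mul_conjTranspose :
    gaussianS8 * gaussianS8ᴴ = (Fintype.card (Fin 8) : GaussianInt) • 1 := by
  decide

/-- The matrix `S₈` with entries `e^{2πi·M_{jk}/4}` is a complex Hadamard matrix. -/
theorem S8_isHadamard :
    IsCHadamard (Matrix.of fun j k : Fin 8 =>
      Complex.exp (2 * π * Complex.I * (M8 j k : ℂ) / 4)) := by
  have hS8 : (Matrix.of fun j k : Fin 8 => Complex.exp (2 * π * Complex.I * (M8 j k : ℂ) / 4))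
      = gaussianS8.map toComplex := by
    ext j k
    simp [gaussianS8, exp_two_pi_mul_I_mul_div_four, toComplex_sqrtd]
  rw [hS8]
  exact isCHadamard_map_toComplex gaussianS8_norm gaussianS8_mul_conjTranspose
end

section
/- Let L be an N×N complex Hadamard matrix with a chosen logarithm matrix log L (entries in [0,1) with L_{jk} = e^{2πi (log L)_{jk}}). Suppose there exist an n-element index set I and m rows of log L that are pairwise I-equivalent. If M is any complex Hadamard matrix equivalent to L (M = D1 P1 L P2 D2 for unitary diagonal D1, D2 and permutations P1, P2), then log M also admits an n-element index set J and m rows that are pairwise J-equivalent. -/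
open Matrix Complex Real

/-- Two rows `s, q` of a real matrix `A` are `I`-equivalent if the fractional parts
of the entrywise differences `A s i − A q i` agree for all `i ∈ I`. -/
def IEquivRows {N : ℕ} (A : Matrix (Fin N) (Fin N) ℝ) (I : Finset (Fin N))
    (s t : Fin N) : Prop :=
  ∃ c : ℝ, ∀ i ∈ I, Int.fract (A s i - A t i) = c

/-! Rows `s, t` of the log-matrix are `I`-equivalent exactly when the entrywise quotient of rows
`s, t` of the matrix itself is constant on `I`. Left and right multiplication by diagonal matrices
only multiplies that quotient by `d₁ s / d₁ t`, and permutations relabel rows and columns. -/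

lemma exp_two_pi_I_mul_eq_iff_fract_eq (x y : ℝ) :
    Complex.exp (2 * π * Complex.I * x) = Complex.exp (2 * π * Complex.I * y) ↔
      Int.fract x = Int.fract y := by
  have h2πI : 2 * π * Complex.I ≠ 0 := by simp [Real.pi_ne_zero]
  rw [Complex.exp_eq_exp_iff_exists_int, Int.fract_eq_fract]
  refine exists_congr fun n => ?_
  rw [← sub_eq_iff_eq_add', ← mul_sub, mul_comm, mul_left_inj' h2πI, ← ofReal_sub]
  norm_cast

lemma iEquivRows_iff_div_eq {N : ℕ} {A : Matrix (Fin N) (Fin N) ℝ}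
    {H : Matrix (Fin N) (Fin N) ℂ}
    (hA : ∀ j k, H j k = Complex.exp (2 * π * Complex.I * (A j k : ℂ)))
    (I : Finset (Fin N)) (s t : Fin N) :
    IEquivRows A I s t ↔ ∀ i ∈ I, ∀ j ∈ I, H s i / H t i = H s j / H t j := by
  have hdiv (k : Fin N) :
      H s k / H t k = Complex.exp (2 * π * Complex.I * ((A s k - A t k : ℝ) : ℂ)) := by
    rw [hA, hA, ← Complex.exp_sub, ofReal_sub, mul_sub]
  simp only [hdiv, exp_two_pi_I_mul_eq_iff_fract_eq]
  constructor
  · rintro ⟨c, hc⟩ i hi j hj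
    rw [hc i hi, hc j hj]
  · intro h
    rcases I.eq_empty_or_nonempty with rfl | ⟨i₀, hi₀⟩
    · exact ⟨0, by simp⟩
    · exact ⟨_, fun i hi => h i hi i₀ hi₀⟩

lemma Matrix.diagonal_mul_permMatrix_mul_mul_permMatrix_mul_diagonal_apply {ι R : Type*}
    [Fintype ι] [DecidableEq ι] [CommSemiring R] (d₁ d₂ : ι → R) (σ τ : Equiv.Perm ι)
    (L : Matrix ι ι R) (i j : ι) :
    (diagonal d₁ * σ.permMatrix R * L * τ.permMatrix R * diagonal d₂) i j =
      d₁ i * L (σ i) (τ.symm j) * d₂ j := by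
  rw [Matrix.mul_assoc (diagonal d₁), Equiv.Perm.permMatrix, PEquiv.toMatrix_toPEquiv_mul,
    Equiv.Perm.permMatrix, PEquiv.mul_toMatrix_toPEquiv, mul_diagonal, submatrix_apply,
    diagonal_mul, submatrix_apply]
  rfl

lemma Matrix.apply_div_apply_of_apply_eq_mul_mul {ι K : Type*} [Field K]
    {M L : Matrix ι ι K} {d₁ d₂ : ι → K} {σ τ : ι → ι}
    (hM : ∀ i j, M i j = d₁ i * L (σ i) (τ j) * d₂ j)
    {j : ι} (hj : d₂ j ≠ 0) (s t : ι) :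
    M s j / M t j = d₁ s / d₁ t * (L (σ s) (τ j) / L (σ t) (τ j)) := by
  rw [hM, hM, mul_div_mul_right _ _ hj, mul_div_mul_comm]

theorem IEquiv_preserved_under_equivalence_general
    (N n m : ℕ) (L M : Matrix (Fin N) (Fin N) ℂ)
    (logL logM : Matrix (Fin N) (Fin N) ℝ)
    (hlogL : ∀ j k, L j k = Complex.exp (2 * π * Complex.I * (logL j k : ℂ)))
    (hlogM : ∀ j k, M j k = Complex.exp (2 * π * Complex.I * (logM j k : ℂ)))
    (d1 d2 : Fin N → ℂ)
    (p1 p2 : Equiv.Perm (Fin N))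
    (hM : M = Matrix.diagonal d1 * p1.permMatrix ℂ * L * p2.permMatrix ℂ *
      Matrix.diagonal d2)
    (I : Finset (Fin N)) (hI : I.card = n)
    (R : Finset (Fin N)) (hR : R.card = m)
    (hEq : ∀ s ∈ R, ∀ t ∈ R, IEquivRows logL I s t) :
    ∃ (J R' : Finset (Fin N)), J.card = n ∧ R'.card = m ∧
      ∀ s ∈ R', ∀ t ∈ R', IEquivRows logM J s t := by
  have hMapply : ∀ i j, M i j = d1 i * L (p1 i) (p2.symm j) * d2 j := fun i j => by
    rw [hM, diagonal_mul_permMatrix_mul_mul_permMatrix_mul_diagonal_apply]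
  have hd2 : ∀ j, d2 j ≠ 0 := fun j hj => exp_ne_zero _ <| by
    rw [← hlogM j j, hMapply, hj, mul_zero]
  refine ⟨I.map p2.toEmbedding, R.map p1.symm.toEmbedding, by simp [hI], by simp [hR], ?_⟩
  intro s hs t ht
  simp only [Finset.mem_map_equiv, Equiv.symm_symm] at hs ht
  have hL := (iEquivRows_iff_div_eq hlogL I _ _).1 (hEq _ hs _ ht)
  rw [iEquivRows_iff_div_eq hlogM]
  intro i hi j hj
  simp only [Finset.mem_map_equiv] at hi hj
  rw [apply_div_apply_of_apply_eq_mul_mul hMapply (hd2 i),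
    apply_div_apply_of_apply_eq_mul_mul hMapply (hd2 j), hL _ hi _ hj]

/-- Existing `I`-equivalences between rows of the log-matrix are retained under
equivalence of Hadamard matrices. -/
theorem IEquiv_preserved_under_equivalence
    (N n m : ℕ) (L M : Matrix (Fin N) (Fin N) ℂ) (hL : IsCHadamard L)
    (logL logM : Matrix (Fin N) (Fin N) ℝ)
    (hrangeL : ∀ j k, logL j k ∈ Set.Ico (0 : ℝ) 1)
    (hrangeM : ∀ j k, logM j k ∈ Set.Ico (0 : ℝ) 1)
    (hlogL : ∀ j k, L j k = Complex.exp (2 * π * Complex.I * (logL j k : ℂ)))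
    (hlogM : ∀ j k, M j k = Complex.exp (2 * π * Complex.I * (logM j k : ℂ)))
    (d1 d2 : Fin N → ℂ)
    (hd1 : ∀ i, ‖d1 i‖ = 1) (hd2 : ∀ i, ‖d2 i‖ = 1)
    (p1 p2 : Equiv.Perm (Fin N))
    (hM : M = Matrix.diagonal d1 * p1.permMatrix ℂ * L * p2.permMatrix ℂ *
      Matrix.diagonal d2)
    (I : Finset (Fin N)) (hI : I.card = n)
    (R : Finset (Fin N)) (hR : R.card = m)
    (hEq : ∀ s ∈ R, ∀ t ∈ R, IEquivRows logL I s t) :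
    ∃ (J R' : Finset (Fin N)), J.card = n ∧ R'.card = m ∧
      ∀ s ∈ R', ∀ t ∈ R', IEquivRows logM J s t :=
  IEquiv_preserved_under_equivalence_general N n m L M logL logM hlogL hlogM d1 d2 p1 p2 hM I hI R
    hR hEq
end

section
/- If K is a Dita-type complex Hadamard matrix of order N = nk built from a k×k matrix M and n×n matrices N_1,...,N_k, then the log-matrix log K admits a partition of the N column indices into k sets I_1,...,I_k of size n, and a partition of the rows into n groups of k rows each, such that within each group any two rows are I_m-equivalent for every m = 1,...,k (i.e. the rows in each group are (k)-n-equivalent). -/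
/-! In the column block `m`, the rows `(i, j)` and `(i', j)` of `K` are `M i m • Ns m j` and
`M i' m • Ns m j`, so their entrywise quotient is the constant `M i m / M i' m`. The quotient of
two entries of `K` is `exp (2πi)` of the difference of their logarithms, and `exp (2πi ·)` determines
its argument modulo `1`. -/

open Matrix Complex Real

lemma Int.fract_eq_fract_of_cexp_two_pi_I_mul_eq {x y : ℝ}
    (h : cexp (2 * π * I * x) = cexp (2 * π * I * y)) : Int.fract x = Int.fract y := by
  obtain ⟨z, hz⟩ := Complex.exp_eq_exp_iff_exists_int.mp h
  have h2πI : 2 * π * I ≠ 0 := by simp [Real.pi_ne_zero, I_ne_zero]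
  have hxy : ((x - y : ℝ) : ℂ) = z := by
    apply mul_left_cancel₀ h2πI
    push_cast
    linear_combination hz
  exact Int.fract_eq_fract.mpr ⟨z, mod_cast hxy⟩

lemma exists_forall_fract_eq_of_cexp_two_pi_I_mul_eq {ι : Type*} (f : ι → ℝ) (w : ℂ)
    (h : ∀ b, cexp (2 * π * I * f b) = w) : ∃ c : ℝ, ∀ b, Int.fract (f b) = c := by
  rcases isEmpty_or_nonempty ι with hι | ⟨⟨b₀⟩⟩
  · exact ⟨0, isEmptyElim⟩
  · exact ⟨Int.fract (f b₀), fun b =>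
      Int.fract_eq_fract_of_cexp_two_pi_I_mul_eq ((h b).trans (h b₀).symm)⟩

lemma cexp_two_pi_I_mul_sub (x y : ℝ) :
    cexp (2 * π * I * ((x - y : ℝ) : ℂ)) = cexp (2 * π * I * x) / cexp (2 * π * I * y) := by
  rw [← Complex.exp_sub]
  push_cast
  ring_nf

theorem dita_type_log_structure_general (k n : ℕ)
    (M : Matrix (Fin k) (Fin k) ℂ) (Ns : Fin k → Matrix (Fin n) (Fin n) ℂ)
    (K : Matrix (Fin k × Fin n) (Fin k × Fin n) ℂ)
    (hK : ∀ (i j : Fin k) (a b : Fin n), K (i, a) (j, b) = M i j * Ns j a b)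
    (logK : Matrix (Fin k × Fin n) (Fin k × Fin n) ℝ)
    (hlog : ∀ x y, K x y = Complex.exp (2 * π * Complex.I * (logK x y : ℂ))) :
    ∀ (j : Fin n) (i i' : Fin k) (m : Fin k),
      ∃ c : ℝ, ∀ b : Fin n,
        Int.fract (logK (i, j) (m, b) - logK (i', j) (m, b)) = c := by
  intro j i i' m
  refine exists_forall_fract_eq_of_cexp_two_pi_I_mul_eq _ (M i m / M i' m) fun b => ?_
  have hK_ne : M i' m * Ns m j b ≠ 0 := by
    rw [← hK, hlog]
    exact Complex.exp_ne_zero _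
  rw [cexp_two_pi_I_mul_sub, ← hlog, ← hlog, hK, hK,
    mul_div_mul_right _ _ (right_ne_zero_of_mul hK_ne)]

/-- The log-matrix of a Dita-type matrix has a regular structure: with columns
partitioned into the `k` blocks `I_m = {(m,b) : b}` of size `n` and rows grouped
into the `n` groups `R_j = {(i,j) : i}` of `k` rows each, any two rows in a fixed
group are `I_m`-equivalent for every `m` (i.e. the rows of each group are
pairwise `(k)`-`n`-equivalent). -/
theorem dita_type_log_structure (k n : ℕ)
    (M : Matrix (Fin k) (Fin k) ℂ) (Ns : Fin k → Matrix (Fin n) (Fin n) ℂ)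
    (hM : IsCHadamard M) (hN : ∀ j, IsCHadamard (Ns j))
    (K : Matrix (Fin k × Fin n) (Fin k × Fin n) ℂ)
    (hK : ∀ (i j : Fin k) (a b : Fin n), K (i, a) (j, b) = M i j * Ns j a b)
    (logK : Matrix (Fin k × Fin n) (Fin k × Fin n) ℝ)
    (hlog : ∀ x y, K x y = Complex.exp (2 * π * Complex.I * (logK x y : ℂ))) :
    ∀ (j : Fin n) (i i' : Fin k) (m : Fin k),
      ∃ c : ℝ, ∀ b : Fin n,
        Int.fract (logK (i, j) (m, b) - logK (i', j) (m, b)) = c :=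
  dita_type_log_structure_general k n M Ns K hK logK hlog
end

section
/- In the group G_1 = Z_4 × Z_4 × Z_4, the 8-element set A = {0,1/4}³ (viewed in (Q/Z)³) has spectrum S' = {(0,0,0), (0,1,2), (0,3,2), (1,2,0), (2,0,1), (2,0,3), (2,2,2), (3,2,0)} (integer character row vectors): for any two distinct elements s, s' of S', Σ_{a∈A} e^{2πi⟨s−s', a⟩} = 0. -/
open Complex Real

/-- The perturbed spectrum `S'` of the set `A = {0, 1/4}³` in `G₁ = Z₄ × Z₄ × Z₄`,
listed as 8 integer character row vectors. -/
def Sp8 : Fin 8 → Fin 3 → ℤ :=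
  ![![0,0,0], ![0,1,2], ![0,3,2], ![1,2,0], ![2,0,1], ![2,0,3], ![2,2,2], ![3,2,0]]

lemma factor_zero (d : ℤ) (hd : d % 4 = 2) :
    ∑ t : Fin 2, Complex.exp (2 * π * Complex.I * ((d : ℂ) * ((t : ℕ) : ℂ) / 4)) = 0 := by
  rw [Fin.sum_univ_two]
  have hk : (d : ℂ) = 4 * (d / 4 : ℤ) + 2 := by
    have := Int.mul_ediv_add_emod d 4
    rw [hd] at this
    exact_mod_cast this.symm
  rw [Fin.val_zero, Fin.val_one, Nat.cast_zero, Nat.cast_one, hk]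
  have h1 : (2 * ↑π * Complex.I * ((4 * ((d / 4 : ℤ) : ℂ) + 2) * 1 / 4))
      = ((d / 4 : ℤ) : ℂ) * (2 * ↑π * Complex.I) + ↑π * Complex.I := by ring
  have h0 : (2 * ↑π * Complex.I * ((4 * ((d / 4 : ℤ) : ℂ) + 2) * 0 / 4)) = 0 := by ring
  rw [h0, h1, Complex.exp_zero, Complex.exp_add, Complex.exp_int_mul_two_pi_mul_I,
    Complex.exp_pi_mul_I]
  ring

lemma key (d : Fin 3 → ℤ) (h : ∃ l, d l % 4 = 2) :
    ∑ x : Fin 3 → Fin 2,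
      Complex.exp (2 * π * Complex.I *
        ((∑ l : Fin 3, (d l : ℝ) * (x l : ℝ) / 4 : ℝ) : ℂ)) = 0 := by
  have hsplit : ∀ x : Fin 3 → Fin 2,
      Complex.exp (2 * π * Complex.I *
        ((∑ l : Fin 3, (d l : ℝ) * (x l : ℝ) / 4 : ℝ) : ℂ))
      = ∏ l : Fin 3, Complex.exp (2 * π * Complex.I * ((d l : ℂ) * ((x l : ℕ) : ℂ) / 4)) := by
    intro x
    rw [← Complex.exp_sum, ← Finset.mul_sum]
    congr 1
    push_cast
    ring
  simp only [hsplit]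
  have hps := Finset.prod_univ_sum (κ := fun _ : Fin 3 => Fin 2)
    (t := fun _ => (Finset.univ : Finset (Fin 2)))
    (f := fun l t => Complex.exp (2 * π * Complex.I * ((d l : ℂ) * ((t : ℕ) : ℂ) / 4)))
  rw [Fintype.piFinset_univ] at hps
  rw [← hps]
  obtain ⟨l, hl⟩ := h
  exact Finset.prod_eq_zero (Finset.mem_univ l) (factor_zero (d l) hl)

/-- `S'` is a spectrum of `A = {0, 1/4}³`: for any two distinct elements `s ≠ s'`
of `S'`, `∑_{a∈A} e^{2πi⟨s−s', a⟩} = 0`. -/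
theorem Sp8_is_spectrum (i j : Fin 8) (hij : i ≠ j) :
    ∑ x : Fin 3 → Fin 2,
      Complex.exp (2 * π * Complex.I *
        ((∑ l : Fin 3, ((Sp8 i l - Sp8 j l : ℤ) : ℝ) * (x l : ℝ) / 4 : ℝ) : ℂ)) = 0 := by
  refine key (fun l => Sp8 i l - Sp8 j l) ?_
  revert hij; revert i j; decide
end

section
/- The 16×16 matrix S_16 with entries e^{2πi N_{jk}/8}, where N is the explicit 16×16 integer matrix arising from the set A_{G_3} = {0,2/8} × {0,1/8,2/8,3/8} × {0,1/8} and the perturbed spectrum S'_{G_3} in G_3 = Z_4 × Z_8 × Z_8, is a complex Hadamard matrix. -/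
open Matrix Complex Real

/-- The integer matrix `N = S'_{G₃}·A_{G₃} mod 8` arising from the Szabó-type
construction in `G₃ = Z₄ × Z₈ × Z₈`. -/
def N16 : Matrix (Fin 16) (Fin 16) ℕ :=
  !![0,0,0,0,0,0,0,0,0,0,0,0,0,0,0,0;
     0,4,1,5,2,6,3,7,0,4,1,5,2,6,3,7;
     0,4,3,7,6,2,1,5,0,4,3,7,6,2,1,5;
     0,0,4,4,0,0,4,4,0,0,4,4,0,0,4,4;
     0,4,5,1,2,6,7,3,0,4,5,1,2,6,7,3;
     0,0,6,6,4,4,2,2,0,0,6,6,4,4,2,2;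
     0,4,7,3,6,2,5,1,0,4,7,3,6,2,5,1;
     0,0,2,2,4,4,6,6,2,2,4,4,6,6,0,0;
     0,1,0,1,0,1,0,1,4,5,4,5,4,5,4,5;
     0,5,0,5,0,5,0,5,4,1,4,1,4,1,4,1;
     0,4,2,6,4,0,6,2,4,0,6,2,0,4,2,6;
     0,0,4,4,0,0,4,4,4,4,0,0,4,4,0,0;
     0,4,4,0,0,4,4,0,4,0,0,4,4,0,0,4;
     0,0,6,6,4,4,2,2,4,4,2,2,0,0,6,6;
     0,4,6,2,4,0,2,6,4,0,2,6,0,4,6,2;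
     0,0,2,2,4,4,6,6,6,6,0,0,2,2,4,4]

/-!
Every entry of `S₁₆` is `ψ (N_{jk})` for the standard additive character `ψ` of `ZMod 8`, so the
`(j, k)` entry of `S₁₆ S₁₆ᴴ` is `∑ₘ ψ (N_{jm} - N_{km})`. For `j ≠ k` the differences
`N_{jm} - N_{km}` take each value `r` exactly as often as `r + 4`, and `ψ 4 = -1`, so the
terms cancel in pairs.
-/

open Finset

theorem AddChar.sum_comp_eq_zero_of_card_fiber_add {G ι R : Type*} [AddCommGroup G] [Fintype G]
    [DecidableEq G] [Fintype ι] [CommRing R] [IsDomain R] (ψ : AddChar G R) {t : G} (ht : ψ t ≠ 1)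
    (f : ι → G) (hf : ∀ r, #{m | f m = r + t} = #{m | f m = r}) :
    ∑ m, ψ (f m) = 0 := by
  have hfiber : ∑ m, ψ (f m) = ∑ r, #{m | f m = r} • ψ r := by
    rw [← sum_fiberwise univ f]
    refine sum_congr rfl fun r _ => ?_
    rw [sum_congr rfl fun m hm => by rw [(mem_filter.1 hm).2], sum_const]
  have hshift : ∑ m, ψ (f m) = ψ t * ∑ m, ψ (f m) := calc
    ∑ m, ψ (f m) = ∑ r, #{m | f m = r + t} • ψ (r + t) := by
        rw [hfiber]; exact (Equiv.sum_comp (Equiv.addRight t) fun r => #{m | f m = r} • ψ r).symm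
    _ = ψ t * ∑ m, ψ (f m) := by
        simp_rw [hf, AddChar.map_add_eq_mul, hfiber, mul_sum, mul_smul_comm, mul_comm]
  have hS : (1 - ψ t) * ∑ m, ψ (f m) = 0 := by linear_combination hshift
  exact (mul_eq_zero.1 hS).resolve_left (sub_ne_zero.2 (Ne.symm ht))

theorem isCHadamard_of_addChar {ι G : Type*} [Fintype ι] [DecidableEq ι] [AddCommGroup G]
    [Finite G] (ψ : AddChar G ℂ) (M : Matrix ι ι G)
    (horth : ∀ j k, j ≠ k → ∑ m, ψ (M j m - M k m) = 0) :
    IsCHadamard (Matrix.of fun j k => ψ (M j k)) := by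
  refine ⟨fun j k => AddChar.norm_apply ψ _, ?_⟩
  ext j k
  have hentry : ∀ m, ψ (M j m) * star (ψ (M k m)) = ψ (M j m - M k m) := fun m => by
    rw [sub_eq_add_neg, AddChar.map_add_eq_mul, AddChar.map_neg_eq_conj]; rfl
  simp only [mul_apply, conjTranspose_apply, of_apply, hentry, Matrix.smul_apply, one_apply]
  split_ifs with hjk
  · simp [hjk]
  · simp [horth j k hjk]

theorem card_N16_rowDiff_eq_add_four (j k : Fin 16) (hjk : j ≠ k) (r : ZMod 8) :
    #{m | (N16 j m : ZMod 8) - N16 k m = r + 4} = #{m | (N16 j m : ZMod 8) - N16 k m = r} := by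
  revert j k r; decide +kernel

/-- The matrix `S₁₆` with entries `e^{2πi·N_{jk}/8}` is a complex Hadamard matrix. -/
theorem S16_isHadamard :
    IsCHadamard (Matrix.of fun j k : Fin 16 =>
      Complex.exp (2 * π * Complex.I * (N16 j k : ℂ) / 8)) := by
  have hS : (Matrix.of fun j k : Fin 16 => Complex.exp (2 * π * Complex.I * (N16 j k : ℂ) / 8)) =
      Matrix.of fun j k => ZMod.stdAddChar (N16 j k : ZMod 8) := by
    ext j k; simp [ZMod.stdAddChar_apply, ZMod.toCircle_natCast]
  have hψ4 : ZMod.stdAddChar (N := 8) 4 ≠ 1 := by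
    rw [← AddChar.map_zero_eq_one (ZMod.stdAddChar (N := 8)), ZMod.injective_stdAddChar.ne_iff]; decide
  rw [hS]
  exact isCHadamard_of_addChar _ _ fun j k hjk =>
    AddChar.sum_comp_eq_zero_of_card_fiber_add _ hψ4 _ (card_N16_rowDiff_eq_add_four j k hjk)
end
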